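/- Let 0 < p ≤ 1 ≤ s < ∞ with p < s, λ > n(s/p - 1), and γ_p = n(1/p - 1). Suppose M satisfies the two molecule size conditions (M1) and (M2) with respect to B = B(x_B, r), with r ≥ 1. Then for every multi-index α with |α| ≤ γ_p, |∫ M(x)(x - x_B)^α dx| ≤ C_{n,s,p,λ}, i.e. the moments of M up to order ⌊γ_p⌋ are bounded by a constant independent of M and r. -/

import Mathlib

/-!
Write `g = |M|`, `ρ(y) = |y - x_B|`, `γ = n (1/p - 1)` and `θ = l/s + n (1/s - 1/p)`; the
hypothesis `l > n (s/p - 1)` says exactly that `θ > 0`. Since `r ≥ 1`, the monomial of order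
`|α| ≤ γ` is bounded by `r^γ` on `B` and by `ρ^γ` off `B`, so it suffices to bound
`r^γ ∫_B g + ∫_{Bᶜ} g ρ^γ`. Hölder's inequality and (M1) give `∫_B g ≤ r^{-γ} |B(0,1)|^{1 - 1/s}`.
On the annulus `2^k r ≤ ρ < 2^{k+1} r`, Hölder's inequality, Chebyshev's inequality for the
weight `ρ^l` and (M2) bound `∫ g ρ^γ` by a constant times `2^{-kθ}`: all powers of `r` cancel.
Summing the geometric series gives a bound independent of `M`, `r` and `α`.
-/

open MeasureTheory Metric ENNReal Module

theorem lintegral_le_lintegral_rpow_mul_measure_univ {X : Type*} [MeasurableSpace X]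
    (μ : Measure X) {s : ℝ} (hs : 1 ≤ s) {g : X → ℝ≥0∞} (hg : AEMeasurable g μ) :
    ∫⁻ x, g x ∂μ ≤ (∫⁻ x, g x ^ s ∂μ) ^ (1 / s) * μ Set.univ ^ (1 - 1 / s) := by
  rcases hs.eq_or_lt with rfl | hs
  · simp
  have hconj := Real.HolderConjugate.conjExponent hs
  simpa [hconj.one_sub_inv] using
    ENNReal.lintegral_mul_le_Lp_mul_Lq μ hconj hg aemeasurable_const (g := fun _ ↦ 1)

section NormedGroup

variable {E : Type*} [NormedAddCommGroup E]

theorem compl_ball_subset_iUnion_annulus (x : E) {r : ℝ} (hr : 0 < r) :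
    (ball x r)ᶜ ⊆ ⋃ k : ℕ, ball x (2 * (2 ^ k * r)) \ ball x (2 ^ k * r) := by
  intro y hy
  have hyr : 1 ≤ ‖y - x‖ / r := by
    rw [one_le_div hr, ← dist_eq_norm]
    simpa using hy
  obtain ⟨k, hk, hk'⟩ := exists_nat_pow_near hyr one_lt_two
  rw [le_div_iff₀ hr] at hk
  rw [div_lt_iff₀ hr, pow_succ, mul_comm _ (2 : ℝ), mul_assoc] at hk'
  simp only [Set.mem_iUnion, Set.mem_sdiff, mem_ball, dist_eq_norm, not_lt]
  exact ⟨k, hk', hk⟩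

variable [MeasurableSpace E] {μ : Measure E}

theorem setLIntegral_le_rpow_neg_mul_setLIntegral_mul_rpow {A : Set E} (hA : MeasurableSet A)
    {x : E} {R l : ℝ} (hR : 0 < R) (hl : 0 ≤ l) (hAR : ∀ y ∈ A, R ≤ ‖y - x‖) (h : E → ℝ≥0∞) :
    ∫⁻ y in A, h y ∂μ
      ≤ ENNReal.ofReal (R ^ (-l)) * ∫⁻ y in A, h y * ENNReal.ofReal (‖y - x‖ ^ l) ∂μ := by
  rw [← lintegral_const_mul' _ _ ofReal_ne_top]
  refine setLIntegral_mono' hA fun y hy ↦ ?_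
  have hweight : 1 ≤ R ^ (-l) * ‖y - x‖ ^ l := by
    rw [Real.rpow_neg hR.le, inv_mul_eq_div, one_le_div (by positivity)]
    exact Real.rpow_le_rpow hR.le (hAR y hy) hl
  calc h y = h y * ENNReal.ofReal 1 := by simp
    _ ≤ h y * ENNReal.ofReal (R ^ (-l) * ‖y - x‖ ^ l) := by gcongr
    _ = _ := by rw [ENNReal.ofReal_mul (by positivity)]; ring

theorem setLIntegral_mul_norm_sub_rpow_le {A : Set E} (hA : MeasurableSet A) {x : E} {ρ a : ℝ}
    (ha : 0 ≤ a) (hAρ : A ⊆ closedBall x ρ) (g : E → ℝ≥0∞) :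
    ∫⁻ y in A, g y * ENNReal.ofReal (‖y - x‖ ^ a) ∂μ
      ≤ ENNReal.ofReal (ρ ^ a) * ∫⁻ y in A, g y ∂μ := by
  rw [← lintegral_const_mul' _ _ ofReal_ne_top]
  refine setLIntegral_mono' hA fun y hy ↦ ?_
  rw [mul_comm]
  gcongr
  rw [← dist_eq_norm]
  exact hAρ hy

end NormedGroup

section Molecule

variable {E : Type*} [NormedAddCommGroup E] [NormedSpace ℝ E] [MeasurableSpace E]

local notation "dim" => (finrank ℝ E : ℝ)

structure IsMolecule (μ : Measure E) (p s l : ℝ) (g : E → ℝ≥0∞) (x : E) (r : ℝ) : Prop where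
  ball_le : (∫⁻ y in ball x r, g y ^ s ∂μ) ^ (1 / s) ≤ ENNReal.ofReal (r ^ (dim * (1 / s - 1 / p)))
  compl_ball_le : (∫⁻ y in (ball x r)ᶜ, g y ^ s * ENNReal.ofReal (‖y - x‖ ^ l) ∂μ) ^ (1 / s)
    ≤ ENNReal.ofReal (r ^ (l / s + dim * (1 / s - 1 / p)))

variable [FiniteDimensional ℝ E] {μ : Measure E} [μ.IsAddHaarMeasure]
  {p s l : ℝ} {g : E → ℝ≥0∞} {x : E} {r : ℝ}

local notation "γ" => dim * (1 / p - 1)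
local notation "θ" => l / s + dim * (1 / s - 1 / p)

theorem measureReal_ball_zero_one_pos : 0 < μ.real (ball (0 : E) 1) :=
  ENNReal.toReal_pos (measure_ball_pos μ _ one_pos).ne' measure_ball_lt_top.ne

variable [BorelSpace E]

theorem measure_ball_eq_ofReal (x : E) {ρ : ℝ} (hρ : 0 < ρ) :
    μ (ball x ρ) = ENNReal.ofReal (ρ ^ dim * μ.real (ball 0 1)) := by
  rw [Real.rpow_natCast, ENNReal.ofReal_mul (by positivity),
    ofReal_measureReal measure_ball_lt_top.ne]
  exact μ.addHaar_ball_of_pos x hρ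

theorem setLIntegral_le_lintegral_rpow_mul_of_subset_ball {A : Set E} {ρ : ℝ} (hρ : 0 < ρ)
    (hA : A ⊆ ball x ρ) (hs : 1 ≤ s) (hgm : AEMeasurable g μ) :
    ∫⁻ y in A, g y ∂μ ≤ (∫⁻ y in A, g y ^ s ∂μ) ^ (1 / s)
      * ENNReal.ofReal ((ρ ^ dim * μ.real (ball 0 1)) ^ (1 - 1 / s)) := by
  have hs0 : 0 ≤ 1 - 1 / s := sub_nonneg.2 ((div_le_one (by linarith)).2 hs)
  refine (lintegral_le_lintegral_rpow_mul_measure_univ _ hs hgm.restrict).trans ?_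
  rw [Measure.restrict_apply_univ, ← ENNReal.ofReal_rpow_of_nonneg (by positivity) hs0,
    ← measure_ball_eq_ofReal x hρ]
  gcongr

theorem IsMolecule.rpow_mul_setLIntegral_ball_le (hg : IsMolecule μ p s l g x r)
    (hs : 1 ≤ s) (hgm : AEMeasurable g μ) (hr : 0 < r) :
    ENNReal.ofReal (r ^ γ) * ∫⁻ y in ball x r, g y ∂μ
      ≤ ENNReal.ofReal (μ.real (ball 0 1) ^ (1 - 1 / s)) := by
  have hv : 0 < μ.real (ball (0 : E) 1) := measureReal_ball_zero_one_pos
  calc ENNReal.ofReal (r ^ γ) * ∫⁻ y in ball x r, g y ∂μ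
      ≤ ENNReal.ofReal (r ^ γ) * (ENNReal.ofReal (r ^ (dim * (1 / s - 1 / p)))
          * ENNReal.ofReal ((r ^ dim * μ.real (ball 0 1)) ^ (1 - 1 / s))) := by
        gcongr
        exact (setLIntegral_le_lintegral_rpow_mul_of_subset_ball hr subset_rfl hs hgm).trans
          (by gcongr; exact hg.ball_le)
    _ = ENNReal.ofReal (μ.real (ball 0 1) ^ (1 - 1 / s)) := by
        rw [← ENNReal.ofReal_mul (by positivity), ← ENNReal.ofReal_mul (by positivity),
          Real.mul_rpow (by positivity) hv.le, ← Real.rpow_mul hr.le, ← mul_assoc, ← mul_assoc,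
          ← Real.rpow_add hr, ← Real.rpow_add hr]
        have hexp : γ + dim * (1 / s - 1 / p) + dim * (1 - 1 / s) = 0 := by ring
        rw [hexp, Real.rpow_zero, one_mul]

theorem IsMolecule.setLIntegral_annulus_le (hg : IsMolecule μ p s l g x r)
    (hp : 0 < p) (hp1 : p ≤ 1) (hs : 1 ≤ s) (hl : 0 ≤ l) (hgm : AEMeasurable g μ) (hr : 0 < r)
    (k : ℕ) :
    ∫⁻ y in ball x (2 * (2 ^ k * r)) \ ball x (2 ^ k * r), g y * ENNReal.ofReal (‖y - x‖ ^ γ) ∂μ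
      ≤ ENNReal.ofReal (2 ^ (γ + dim * (1 - 1 / s)) * μ.real (ball 0 1) ^ (1 - 1 / s)
          * ((2 : ℝ) ^ (-θ)) ^ k) := by
  set R : ℝ := 2 ^ k * r
  set A := ball x (2 * R) \ ball x R
  have hv : 0 < μ.real (ball (0 : E) 1) := measureReal_ball_zero_one_pos
  have hR : 0 < R := by positivity
  have hγ : 0 ≤ γ := mul_nonneg (Nat.cast_nonneg _) (sub_nonneg.2 (one_le_one_div hp hp1))
  have hA : MeasurableSet A := measurableSet_ball.diff measurableSet_ball
  have hAR : ∀ y ∈ A, R ≤ ‖y - x‖ := fun y hy ↦ by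
    simpa [A, dist_eq_norm] using hy.2
  have hA_compl : A ⊆ (ball x r)ᶜ := fun y hy hyr ↦
    (hAR y hy).not_gt ((mem_ball_iff_norm.1 hyr).trans_le
      (le_mul_of_one_le_left hr.le (one_le_pow₀ one_le_two)))
  have hA_lp : ∫⁻ y in A, g y ^ s ∂μ ≤ ENNReal.ofReal (R ^ (-l))
      * ∫⁻ y in (ball x r)ᶜ, g y ^ s * ENNReal.ofReal (‖y - x‖ ^ l) ∂μ :=
    (setLIntegral_le_rpow_neg_mul_setLIntegral_mul_rpow hA hR hl hAR _).trans
      (by gcongr _ * ?_; exact lintegral_mono_set hA_compl)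
  calc ∫⁻ y in A, g y * ENNReal.ofReal (‖y - x‖ ^ γ) ∂μ
      ≤ ENNReal.ofReal ((2 * R) ^ γ) * ∫⁻ y in A, g y ∂μ :=
        setLIntegral_mul_norm_sub_rpow_le hA hγ (Set.sdiff_subset.trans ball_subset_closedBall) g
    _ ≤ ENNReal.ofReal ((2 * R) ^ γ) * ((ENNReal.ofReal (R ^ (-l)) ^ (1 / s)
          * ENNReal.ofReal (r ^ θ))
          * ENNReal.ofReal (((2 * R) ^ dim * μ.real (ball 0 1)) ^ (1 - 1 / s))) := by
        gcongr
        refine (setLIntegral_le_lintegral_rpow_mul_of_subset_ball (by positivity) Set.sdiff_subset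
          hs hgm).trans ?_
        gcongr ?_ * _
        refine (ENNReal.rpow_le_rpow hA_lp (by positivity)).trans ?_
        rw [ENNReal.mul_rpow_of_nonneg _ _ (by positivity)]
        gcongr
        exact hg.compl_ball_le
    _ = _ := by
        rw [ENNReal.ofReal_rpow_of_nonneg (by positivity) (by positivity),
          ← ENNReal.ofReal_mul (by positivity), ← ENNReal.ofReal_mul (by positivity),
          ← ENNReal.ofReal_mul (by positivity)]
        congr 1
        rw [← Real.rpow_mul hR.le, Real.mul_rpow (by positivity) hv.le,
          ← Real.rpow_mul (by positivity)]
        -- After taking logarithms the identity is linear in `log 2`, `log r`, `log |B(0,1)|`.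
        simp only [Real.rpow_def_of_pos hR, Real.rpow_def_of_pos (mul_pos two_pos hR),
          Real.rpow_def_of_pos hr, Real.rpow_def_of_pos hv, Real.rpow_def_of_pos two_pos,
          Real.log_mul two_ne_zero hR.ne', R, Real.log_mul (pow_ne_zero k two_ne_zero) hr.ne',
          Real.log_pow, ← Real.exp_nat_mul, ← Real.exp_add]
        congr 1
        ring

theorem IsMolecule.setLIntegral_compl_ball_le (hg : IsMolecule μ p s l g x r)
    (hp : 0 < p) (hp1 : p ≤ 1) (hs : 1 ≤ s) (hl : 0 ≤ l) (hθ : 0 < θ)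
    (hgm : AEMeasurable g μ) (hr : 0 < r) :
    ∫⁻ y in (ball x r)ᶜ, g y * ENNReal.ofReal (‖y - x‖ ^ γ) ∂μ
      ≤ ENNReal.ofReal (2 ^ (γ + dim * (1 - 1 / s)) * μ.real (ball 0 1) ^ (1 - 1 / s)
          * (1 - (2 : ℝ) ^ (-θ))⁻¹) := by
  set K : ℝ := 2 ^ (γ + dim * (1 - 1 / s)) * μ.real (ball 0 1) ^ (1 - 1 / s)
  set q : ℝ := (2 : ℝ) ^ (-θ)
  have hv : 0 < μ.real (ball (0 : E) 1) := measureReal_ball_zero_one_pos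
  have hq : q < 1 := Real.rpow_lt_one_of_one_lt_of_neg one_lt_two (neg_neg_iff_pos.2 hθ)
  calc _ ≤ ∫⁻ y in ⋃ k : ℕ, ball x (2 * (2 ^ k * r)) \ ball x (2 ^ k * r),
          g y * ENNReal.ofReal (‖y - x‖ ^ γ) ∂μ :=
        lintegral_mono_set (compl_ball_subset_iUnion_annulus x hr)
    _ ≤ ∑' k : ℕ, ∫⁻ y in ball x (2 * (2 ^ k * r)) \ ball x (2 ^ k * r),
          g y * ENNReal.ofReal (‖y - x‖ ^ γ) ∂μ :=
        lintegral_iUnion_le _ _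
    _ ≤ ∑' k : ℕ, ENNReal.ofReal (K * q ^ k) :=
        ENNReal.tsum_le_tsum fun k ↦ hg.setLIntegral_annulus_le hp hp1 hs hl hgm hr k
    _ = ENNReal.ofReal (K * (1 - q)⁻¹) := by
        rw [← ENNReal.ofReal_tsum_of_nonneg (fun k ↦ by positivity)
          ((summable_geometric_of_lt_one (by positivity) hq).mul_left K), tsum_mul_left,
          tsum_geometric_of_lt_one (by positivity) hq]

theorem exists_lintegral_mul_rpow_le_of_isMolecule (μ : Measure E) [μ.IsAddHaarMeasure]
    (hp : 0 < p) (hp1 : p ≤ 1) (hs : 1 ≤ s) (hl : dim * (s / p - 1) < l) :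
    ∃ C : ℝ, 0 < C ∧ ∀ (g : E → ℝ≥0∞) (x : E) (r : ℝ), IsMolecule μ p s l g x r →
      AEMeasurable g μ → 1 ≤ r → ∀ a : ℝ, 0 ≤ a → a ≤ γ →
        ∫⁻ y, g y * ENNReal.ofReal (‖y - x‖ ^ a) ∂μ ≤ ENNReal.ofReal C := by
  have hl0 : 0 ≤ l := by
    refine le_trans (mul_nonneg (Nat.cast_nonneg _) ?_) hl.le
    rw [sub_nonneg, one_le_div hp]
    linarith
  have hθ : 0 < θ := by
    have hs0 : 0 < s := by linarith
    rw [← mul_lt_mul_iff_of_pos_left hs0]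
    field_simp
    field_simp at hl
    linarith
  have hv : 0 < μ.real (ball (0 : E) 1) := measureReal_ball_zero_one_pos
  have hq : 0 < 1 - (2 : ℝ) ^ (-θ) :=
    sub_pos.2 (Real.rpow_lt_one_of_one_lt_of_neg one_lt_two (neg_neg_iff_pos.2 hθ))
  refine ⟨μ.real (ball 0 1) ^ (1 - 1 / s) + 2 ^ (γ + dim * (1 - 1 / s))
    * μ.real (ball 0 1) ^ (1 - 1 / s) * (1 - (2 : ℝ) ^ (-θ))⁻¹,
    by positivity, fun g x r hg hgm hr a ha haγ ↦ ?_⟩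
  have hr0 : 0 < r := one_pos.trans_le hr
  rw [← lintegral_add_compl _ measurableSet_ball (A := ball x r),
    ENNReal.ofReal_add (by positivity) (by positivity)]
  gcongr ?_ + ?_
  · refine (setLIntegral_mul_norm_sub_rpow_le measurableSet_ball ha ball_subset_closedBall g).trans
      (le_trans ?_ (hg.rpow_mul_setLIntegral_ball_le hs hgm hr0))
    gcongr
  · refine le_trans (setLIntegral_mono' measurableSet_ball.compl fun y hy ↦ ?_)
      (hg.setLIntegral_compl_ball_le hp hp1 hs hl0 hθ hgm hr0)
    gcongr
    exact hr.trans (by simpa [dist_eq_norm] using hy)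

end Molecule

theorem EuclideanSpace.abs_prod_sub_pow_le {ι : Type*} [Fintype ι] (x y : EuclideanSpace ℝ ι)
    (α : ι → ℕ) : |∏ i, (x i - y i) ^ α i| ≤ ‖x - y‖ ^ ∑ i, α i := by
  rw [Finset.abs_prod, ← Finset.prod_pow_eq_pow_sum]
  gcongr with i
  rw [abs_pow]
  gcongr
  exact PiLp.norm_apply_le (x - y) i

theorem stmt3_general (n : ℕ) (p s l : ℝ)
    (hp : 0 < p) (hp1 : p ≤ 1) (hs : 1 ≤ s)
    (hl : (n : ℝ) * (s / p - 1) < l) :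
    ∃ C : ℝ, 0 < C ∧
      ∀ (M : EuclideanSpace ℝ (Fin n) → ℂ) (xB : EuclideanSpace ℝ (Fin n)) (r : ℝ),
        1 ≤ r → Measurable M →
        (∫⁻ x in ball xB r, (‖M x‖₊ : ℝ≥0∞) ^ s) ^ (1 / s)
          ≤ ENNReal.ofReal (r ^ ((n : ℝ) * (1 / s - 1 / p))) →
        (∫⁻ x in (ball xB r)ᶜ,
            (‖M x‖₊ : ℝ≥0∞) ^ s * ENNReal.ofReal (‖x - xB‖ ^ l)) ^ (1 / s)
          ≤ ENNReal.ofReal (r ^ (l / s + (n : ℝ) * (1 / s - 1 / p))) →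
        ∀ α : Fin n → ℕ, (∑ i, (α i : ℝ)) ≤ (n : ℝ) * (1 / p - 1) →
          ‖∫ x, M x * ((∏ i, (x i - xB i) ^ α i : ℝ) : ℂ)‖ ≤ C := by
  obtain ⟨C, hC, hbound⟩ := exists_lintegral_mul_rpow_le_of_isMolecule
    (volume : Measure (EuclideanSpace ℝ (Fin n))) hp hp1 hs (by rwa [finrank_euclideanSpace_fin])
  refine ⟨C, hC, fun M xB r hr hM hM1 hM2 α hα ↦ ?_⟩
  have hmol : IsMolecule volume p s l (fun y ↦ (‖M y‖₊ : ℝ≥0∞)) xB r :=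
    ⟨by rwa [finrank_euclideanSpace_fin], by rwa [finrank_euclideanSpace_fin]⟩
  have hmonomial : ∀ y, ENNReal.ofReal ‖M y * ((∏ i, (y i - xB i) ^ α i : ℝ) : ℂ)‖
      ≤ ‖M y‖₊ * ENNReal.ofReal (‖y - xB‖ ^ ((∑ i, α i : ℕ) : ℝ)) := fun y ↦ by
    rw [norm_mul, Complex.norm_real, Real.norm_eq_abs, ENNReal.ofReal_mul (norm_nonneg _),
      ofReal_norm, enorm_eq_nnnorm, Real.rpow_natCast]
    gcongr
    exact EuclideanSpace.abs_prod_sub_pow_le y xB α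
  calc ‖∫ x, M x * ((∏ i, (x i - xB i) ^ α i : ℝ) : ℂ)‖
      ≤ (∫⁻ x, ENNReal.ofReal ‖M x * ((∏ i, (x i - xB i) ^ α i : ℝ) : ℂ)‖).toReal :=
        norm_integral_le_lintegral_norm _
    _ ≤ C := ENNReal.toReal_le_of_le_ofReal hC.le <| (lintegral_mono hmonomial).trans <|
        hbound _ xB r hmol hM.nnnorm.coe_nnreal_ennreal.aemeasurable hr _ (Nat.cast_nonneg _)
          (by rw [finrank_euclideanSpace_fin]; push_cast; exact hα)

/-- For a molecule associated to a large ball (`r ≥ 1`), the moments up to order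
`⌊γ_p⌋` are bounded by a constant independent of `M` and `r`. -/
theorem stmt3 (n : ℕ) (p s l : ℝ)
    (hp : 0 < p) (hp1 : p ≤ 1) (hs : 1 ≤ s) (hps : p < s)
    (hl : (n : ℝ) * (s / p - 1) < l) :
    ∃ C : ℝ, 0 < C ∧
      ∀ (M : EuclideanSpace ℝ (Fin n) → ℂ) (xB : EuclideanSpace ℝ (Fin n)) (r : ℝ),
        1 ≤ r → Measurable M →
        (∫⁻ x in ball xB r, (‖M x‖₊ : ℝ≥0∞) ^ s) ^ (1 / s)
          ≤ ENNReal.ofReal (r ^ ((n : ℝ) * (1 / s - 1 / p))) →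
        (∫⁻ x in (ball xB r)ᶜ,
            (‖M x‖₊ : ℝ≥0∞) ^ s * ENNReal.ofReal (‖x - xB‖ ^ l)) ^ (1 / s)
          ≤ ENNReal.ofReal (r ^ (l / s + (n : ℝ) * (1 / s - 1 / p))) →
        ∀ α : Fin n → ℕ, (∑ i, (α i : ℝ)) ≤ (n : ℝ) * (1 / p - 1) →
          ‖∫ x, M x * ((∏ i, (x i - xB i) ^ α i : ℝ) : ℂ)‖ ≤ C :=
  stmt3_general n p s l hp hp1 hs hl
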